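/- For any algebraic curvature operator Rm on Λ²ℝⁿ, the identity Ric ∧ id − Rm = Rm # I holds, where I is the identity operator on Λ²ℝⁿ and # is the sharp operator of Böhm–Wilking. -/
import Mathlib


open scoped BigOperators

/-- The matrix of the basis element `eᵢ ∧ eⱼ` of `Λ²ℝⁿ ≅ 𝔰𝔬(n)` (for `i < j`
these form an orthonormal basis of `𝔰𝔬(n)` for `⟨A,B⟩ = (1/2)tr(AᵀB)`). -/
def bm {n : ℕ} (i j : Fin n) : Fin n → Fin n → ℝ := fun a b =>
  (if a = i ∧ b = j then 1 else 0) - (if a = j ∧ b = i then 1 else 0)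

/-- Commutator of matrices. -/
def matComm {n : ℕ} (A B : Fin n → Fin n → ℝ) : Fin n → Fin n → ℝ :=
  fun a b => ∑ k, (A a k * B k b - B a k * A k b)

/-- The inner product on `𝔰𝔬(n) ≅ Λ²ℝⁿ`, `⟨A,B⟩ = (1/2)·tr(AᵀB)`, for which the
`eᵢ ∧ eⱼ` (`i < j`) are orthonormal. -/
noncomputable def soInner {n : ℕ} (A B : Fin n → Fin n → ℝ) : ℝ :=
  (1 / 2) * ∑ a, ∑ b, A a b * B a b

/-- The curvature operator `Rm` acting on `Λ²ℝⁿ ≅ 𝔰𝔬(n)`, in components. -/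
noncomputable def rmOp {n : ℕ} (R4 : Fin n → Fin n → Fin n → Fin n → ℝ)
    (M : Fin n → Fin n → ℝ) : Fin n → Fin n → ℝ :=
  fun k l => (1 / 2) * ∑ i, ∑ j, R4 i j k l * M i j

section helpers

variable {n : ℕ}

lemma rm_bm {n : ℕ} (R4 : Fin n → Fin n → Fin n → Fin n → ℝ)
    (hanti : ∀ i j k l, R4 i j k l = - R4 j i k l) (i j k l : Fin n) :
    rmOp R4 (bm i j) k l = R4 i j k l := by
  simp only [rmOp, bm, mul_sub, Finset.sum_sub_distrib, ite_and, mul_ite, mul_one, mul_zero,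
    Finset.sum_ite_irrel, Finset.sum_const_zero, Finset.sum_ite_eq', Finset.mem_univ, if_true]
  rw [hanti j i k l]; ring

lemma commInner {n : ℕ} (ξ S : Fin n → Fin n → ℝ) (hS : ∀ a b, S a b = - S b a)
    (hξ : ∀ a b, ξ a b = - ξ b a) (k l : Fin n) :
    soInner (matComm S (bm k l)) ξ = (∑ a, S a k * ξ a l) - ∑ a, S a l * ξ a k := by
  simp only [matComm, soInner, bm, mul_sub, sub_mul, mul_ite, ite_mul, mul_one, mul_zero,
    one_mul, zero_mul, Finset.sum_sub_distrib, ite_and, Finset.sum_ite_irrel,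
    Finset.sum_const_zero, Finset.sum_ite_eq, Finset.sum_ite_eq', Finset.mem_univ, if_true,
    Finset.sum_mul]
  have h1 : ∀ p q : Fin n, ∑ x, S p x * ξ q x = ∑ x, S x p * ξ x q := by
    intro p q; apply Finset.sum_congr rfl; intro x _; rw [hS p x, hξ q x]; ring
  rw [h1, h1]; ring

lemma sum3_congr {f g : Fin n → Fin n → Fin n → ℝ}
    (h : ∀ i j k, f i j k = g i j k) :
    ∑ i, ∑ j, ∑ k, f i j k = ∑ i, ∑ j, ∑ k, g i j k := by
  simp only [h]

lemma sum4_congr {f g : Fin n → Fin n → Fin n → Fin n → ℝ}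
    (h : ∀ i j k l, f i j k l = g i j k l) :
    ∑ i, ∑ j, ∑ k, ∑ l, f i j k l = ∑ i, ∑ j, ∑ k, ∑ l, g i j k l := by
  simp only [h]

lemma sum2_congr {f g : Fin n → Fin n → ℝ} (h : ∀ a b, f a b = g a b) :
    ∑ a, ∑ b, f a b = ∑ a, ∑ b, g a b := by
  simp only [h]

lemma s12_3 (g : Fin n → Fin n → Fin n → ℝ) :
    ∑ i, ∑ j, ∑ k, g i j k = ∑ i, ∑ j, ∑ k, g j i k := Finset.sum_comm

lemma s12_4 (g : Fin n → Fin n → Fin n → Fin n → ℝ) :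
    ∑ i, ∑ j, ∑ k, ∑ l, g i j k l = ∑ i, ∑ j, ∑ k, ∑ l, g j i k l := Finset.sum_comm

lemma s23_4 (g : Fin n → Fin n → Fin n → Fin n → ℝ) :
    ∑ i, ∑ j, ∑ k, ∑ l, g i j k l = ∑ i, ∑ j, ∑ k, ∑ l, g i k j l :=
  Finset.sum_congr rfl fun _ _ => Finset.sum_comm

lemma s34_4 (g : Fin n → Fin n → Fin n → Fin n → ℝ) :
    ∑ i, ∑ j, ∑ k, ∑ l, g i j k l = ∑ i, ∑ j, ∑ k, ∑ l, g i j l k :=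
  Finset.sum_congr rfl fun _ _ => Finset.sum_congr rfl fun _ _ => Finset.sum_comm

lemma cyc1_4 (g : Fin n → Fin n → Fin n → Fin n → ℝ) :
    ∑ i, ∑ j, ∑ k, ∑ l, g i j k l = ∑ i, ∑ j, ∑ k, ∑ l, g j k i l := by
  rw [s23_4]
  exact s12_4 (fun i j k l => g i k j l)

lemma cyc2_4 (g : Fin n → Fin n → Fin n → Fin n → ℝ) :
    ∑ i, ∑ j, ∑ k, ∑ l, g i j k l = ∑ i, ∑ j, ∑ k, ∑ l, g k i j l := by
  rw [s12_4]
  exact s23_4 (fun i j k l => g j i k l)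

lemma pairswap_4 (g : Fin n → Fin n → Fin n → Fin n → ℝ) :
    ∑ i, ∑ j, ∑ k, ∑ l, g i j k l = ∑ i, ∑ j, ∑ k, ∑ l, g k l i j := by
  rw [s23_4, s12_4 (fun i j k l => g i k j l),
    s34_4 (fun i j k l => g j k i l)]
  exact s23_4 (fun i j k l => g j l i k)

lemma rot234a (g : Fin n → Fin n → Fin n → Fin n → ℝ) :
    ∑ i, ∑ j, ∑ k, ∑ l, g i j k l = ∑ i, ∑ j, ∑ k, ∑ l, g i l j k := by
  rw [s23_4]
  exact s34_4 (fun i j k l => g i k j l)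

/-- The first Bianchi key identity: `⟨Rm ξ, ξ⟩`-type sum equals twice the
"twisted" pairing. -/
lemma key_bianchi (R4 : Fin n → Fin n → Fin n → Fin n → ℝ)
    (hanti : ∀ i j k l, R4 i j k l = - R4 j i k l)
    (hbianchi : ∀ i j k l, R4 i j k l + R4 j k i l + R4 k i j l = 0)
    (ξ : Fin n → Fin n → ℝ) (hξ : ∀ a b, ξ a b = - ξ b a) :
    ∑ i, ∑ j, ∑ k, ∑ l, R4 i j k l * ξ i j * ξ k l
      = 2 * ∑ i, ∑ j, ∑ k, ∑ l, R4 i j k l * ξ k j * ξ i l := by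
  have step1 : ∑ i, ∑ j, ∑ k, ∑ l, R4 i j k l * ξ i j * ξ k l
      = (∑ i, ∑ j, ∑ k, ∑ l, (- R4 j k i l) * ξ i j * ξ k l)
        + ∑ i, ∑ j, ∑ k, ∑ l, (- R4 k i j l) * ξ i j * ξ k l := by
    simp only [← Finset.sum_add_distrib]
    apply sum4_congr; intro i j k l
    have h : R4 i j k l = -R4 j k i l - R4 k i j l := by linarith [hbianchi i j k l]
    rw [h]; ring
  rw [step1]
  have hS1 : (∑ i, ∑ j, ∑ k, ∑ l, (- R4 j k i l) * ξ i j * ξ k l)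
      = ∑ i, ∑ j, ∑ k, ∑ l, R4 i j k l * ξ k j * ξ i l := by
    have e1 := cyc1_4 (fun i j k l => (- R4 i j k l) * ξ k i * ξ j l)
    have e2 := s12_4 (fun i j k l => (- R4 i j k l) * ξ k i * ξ j l)
    refine e1.symm.trans (e2.trans ?_)
    apply sum4_congr; intro i j k l; rw [hanti j i k l]; ring
  have hS2 : (∑ i, ∑ j, ∑ k, ∑ l, (- R4 k i j l) * ξ i j * ξ k l)
      = ∑ i, ∑ j, ∑ k, ∑ l, R4 i j k l * ξ k j * ξ i l := by
    have e1 := cyc2_4 (fun i j k l => (- R4 i j k l) * ξ j k * ξ i l)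
    refine e1.symm.trans ?_
    apply sum4_congr; intro i j k l; rw [hξ j k]; ring
  rw [hS1, hS2]; ring

end helpers

lemma bm_anti {n : ℕ} (i j a b : Fin n) : bm i j a b = - bm i j b a := by
  simp only [bm, neg_sub, and_comm]

lemma bm_contract {n : ℕ} (i j k : Fin n) (v : Fin n → ℝ) :
    ∑ a, bm i j a k * v a = (if k = j then v i else 0) - (if k = i then v j else 0) := by
  simp only [bm, sub_mul, ite_mul, one_mul, zero_mul, Finset.sum_sub_distrib, ite_and,
    Finset.sum_ite_irrel, Finset.sum_const_zero, Finset.sum_ite_eq', Finset.mem_univ, if_true]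

/-- Lemma 2.1 of Böhm–Wilking, quoted by Ni–Wilking: `Ric ∧ id − Rm = Rm # I`,
as an identity of quadratic forms on `Λ²ℝⁿ ≅ 𝔰𝔬(n)`.  Here
`Ric a b = ∑ i, R4 a i b i`, `(Ric ∧ id)` is given by
`(A ∧ B)(X∧Y) = (1/2)(A(X)∧B(Y) + B(X)∧A(Y))`, and the sharp product satisfies
`⟨(S#T)ξ, ξ⟩ = (1/2)·∑_{α,β} ⟨[S b_α, T b_β], ξ⟩·⟨[b_α, b_β], ξ⟩` for an
orthonormal basis `{b_α}` of `𝔰𝔬(n)` (the sum below runs over all ordered pairs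
`(i,j)` and `(k,l)`, which counts each unordered basis pair four times, whence
the factor `1/8 = (1/2)·(1/4)`; the sign conventions are those of
matrix commutators).  -/
theorem stmt_16 (n : ℕ) (R4 : Fin n → Fin n → Fin n → Fin n → ℝ)
    (hanti : ∀ i j k l, R4 i j k l = - R4 j i k l)
    (hpair : ∀ i j k l, R4 i j k l = R4 k l i j)
    (hbianchi : ∀ i j k l, R4 i j k l + R4 j k i l + R4 k i j l = 0)
    (ξ : Fin n → Fin n → ℝ) (hξ : ∀ a b, ξ a b = - ξ b a) :
    -- `⟨(Ric ∧ id − Rm)(ξ), ξ⟩` ...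
    soInner (fun a b =>
        (1 / 2 : ℝ) * (∑ k, ((∑ i, R4 a i k i) * ξ k b + ξ a k * (∑ i, R4 k i b i)))
          - rmOp R4 ξ a b) ξ =
    -- ... equals `⟨(Rm # I)(ξ), ξ⟩`
    (1 / 8 : ℝ) * ∑ i, ∑ j, ∑ k, ∑ l,
      soInner (matComm (rmOp R4 (bm i j)) (bm k l)) ξ *
        soInner (matComm (bm i j) (bm k l)) ξ := by
  have hanti2 : ∀ i j k l, R4 i j k l = - R4 i j l k := by
    intro i j k l
    rw [hpair i j k l, hanti k l i j, hpair l k i j]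
  -- pointwise form of the RHS summand
  have hpt : ∀ i j k l : Fin n,
      soInner (matComm (rmOp R4 (bm i j)) (bm k l)) ξ *
        soInner (matComm (bm i j) (bm k l)) ξ
      = ((∑ a, R4 i j a k * ξ a l) - ∑ a, R4 i j a l * ξ a k) *
        (((if k = j then ξ i l else 0) - (if k = i then ξ j l else 0)) -
         ((if l = j then ξ i k else 0) - (if l = i then ξ j k else 0))) := by
    intro i j k l
    have h1 : rmOp R4 (bm i j) = fun a b => R4 i j a b := by
      funext a b; exact rm_bm R4 hanti i j a b
    rw [h1, commInner ξ (fun a b => R4 i j a b) (fun a b => hanti2 i j a b) hξ k l,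
      commInner ξ (bm i j) (bm_anti i j) hξ k l,
      bm_contract i j k (fun a => ξ a l), bm_contract i j l (fun a => ξ a k)]
  -- the RHS quadruple sum
  have hR : (∑ i, ∑ j, ∑ k, ∑ l,
      soInner (matComm (rmOp R4 (bm i j)) (bm k l)) ξ *
        soInner (matComm (bm i j) (bm k l)) ξ)
      = 4 * ∑ i, ∑ j, ∑ l, ((∑ c, R4 i j c j * ξ c l) - ∑ c, R4 i j c l * ξ c j) * ξ i l := by
    rw [sum4_congr hpt]
    simp only [mul_sub, mul_ite, mul_zero, Finset.sum_sub_distrib, Finset.sum_ite_irrel,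
      Finset.sum_const_zero, Finset.sum_ite_eq', Finset.mem_univ, if_true]
    have e12 : ∀ i j l : Fin n,
        ((∑ a, R4 j i a j * ξ a l) - ∑ a, R4 j i a l * ξ a j) * ξ i l
        = -(((∑ c, R4 i j c j * ξ c l) - ∑ c, R4 i j c l * ξ c j) * ξ i l) := by
      intro i j l
      have e1 : (∑ a, R4 j i a j * ξ a l) = -∑ a, R4 i j a j * ξ a l := by
        rw [← Finset.sum_neg_distrib]
        exact Finset.sum_congr rfl fun a _ => by rw [hanti j i a j]; ring
      have e2 : (∑ a, R4 j i a l * ξ a j) = -∑ a, R4 i j a l * ξ a j := by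
        rw [← Finset.sum_neg_distrib]
        exact Finset.sum_congr rfl fun a _ => by rw [hanti j i a l]; ring
      rw [e1, e2]; ring
    have hu2 : (∑ i : Fin n, ∑ j : Fin n, ∑ l : Fin n,
          ((∑ a, R4 i j a i * ξ a l) - ∑ a, R4 i j a l * ξ a i) * ξ j l)
        = - ∑ i, ∑ j, ∑ l, ((∑ c, R4 i j c j * ξ c l) - ∑ c, R4 i j c l * ξ c j) * ξ i l := by
      calc (∑ i : Fin n, ∑ j : Fin n, ∑ l : Fin n,
          ((∑ a, R4 i j a i * ξ a l) - ∑ a, R4 i j a l * ξ a i) * ξ j l)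
          = ∑ i : Fin n, ∑ j : Fin n, ∑ l : Fin n,
            ((∑ a, R4 j i a j * ξ a l) - ∑ a, R4 j i a l * ξ a j) * ξ i l :=
        s12_3 (fun i j l => ((∑ a, R4 i j a i * ξ a l) - ∑ a, R4 i j a l * ξ a i) * ξ j l)
        _ = ∑ i : Fin n, ∑ j : Fin n, ∑ l : Fin n,
            -(((∑ c, R4 i j c j * ξ c l) - ∑ c, R4 i j c l * ξ c j) * ξ i l) := sum3_congr e12
        _ = - ∑ i, ∑ j, ∑ l, ((∑ c, R4 i j c j * ξ c l) - ∑ c, R4 i j c l * ξ c j) * ξ i l := by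
          simp only [Finset.sum_neg_distrib]
    have hu3 : (∑ i : Fin n, ∑ j : Fin n, ∑ l : Fin n,
          ((∑ a, R4 i j a l * ξ a j) - ∑ a, R4 i j a j * ξ a l) * ξ i l)
        = - ∑ i, ∑ j, ∑ l, ((∑ c, R4 i j c j * ξ c l) - ∑ c, R4 i j c l * ξ c j) * ξ i l := by
      calc (∑ i : Fin n, ∑ j : Fin n, ∑ l : Fin n,
          ((∑ a, R4 i j a l * ξ a j) - ∑ a, R4 i j a j * ξ a l) * ξ i l)
          = ∑ i : Fin n, ∑ j : Fin n, ∑ l : Fin n,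
            -(((∑ c, R4 i j c j * ξ c l) - ∑ c, R4 i j c l * ξ c j) * ξ i l) :=
        sum3_congr (fun i j l => by ring)
        _ = - ∑ i, ∑ j, ∑ l, ((∑ c, R4 i j c j * ξ c l) - ∑ c, R4 i j c l * ξ c j) * ξ i l := by
          simp only [Finset.sum_neg_distrib]
    have hu4 : (∑ i : Fin n, ∑ j : Fin n, ∑ l : Fin n,
          ((∑ a, R4 i j a l * ξ a i) - ∑ a, R4 i j a i * ξ a l) * ξ j l)
        = ∑ i, ∑ j, ∑ l, ((∑ c, R4 i j c j * ξ c l) - ∑ c, R4 i j c l * ξ c j) * ξ i l := by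
      calc (∑ i : Fin n, ∑ j : Fin n, ∑ l : Fin n,
          ((∑ a, R4 i j a l * ξ a i) - ∑ a, R4 i j a i * ξ a l) * ξ j l)
          = ∑ i : Fin n, ∑ j : Fin n, ∑ l : Fin n,
            ((∑ a, R4 j i a l * ξ a j) - ∑ a, R4 j i a j * ξ a l) * ξ i l :=
        s12_3 (fun i j l => ((∑ a, R4 i j a l * ξ a i) - ∑ a, R4 i j a i * ξ a l) * ξ j l)
        _ = ∑ i, ∑ j, ∑ l, ((∑ c, R4 i j c j * ξ c l) - ∑ c, R4 i j c l * ξ c j) * ξ i l := by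
          refine sum3_congr fun i j l => ?_
          have := e12 i j l
          have h' : ((∑ a, R4 j i a l * ξ a j) - ∑ a, R4 j i a j * ξ a l) * ξ i l
              = -(((∑ a, R4 j i a j * ξ a l) - ∑ a, R4 j i a l * ξ a j) * ξ i l) := by ring
          rw [h', this]; ring
    rw [hu2, hu3, hu4]
    ring
  rw [hR]
  have hG : (∑ i, ∑ j, ∑ l, ((∑ c, R4 i j c j * ξ c l) - ∑ c, R4 i j c l * ξ c j) * ξ i l)
      = (∑ i, ∑ j, ∑ l, ∑ c, R4 i j c j * ξ c l * ξ i l)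
        - ∑ i, ∑ j, ∑ l, ∑ c, R4 i j c l * ξ c j * ξ i l := by
    simp only [sub_mul, Finset.sum_mul, Finset.sum_sub_distrib]
  rw [hG]
  have expand : ∀ a b : Fin n,
      ((1 / 2 : ℝ) * (∑ k, ((∑ m, R4 a m k m) * ξ k b + ξ a k * (∑ m, R4 k m b m)))
        - (1 / 2 : ℝ) * ∑ i, ∑ j, R4 i j a b * ξ i j) * ξ a b
      = (1 / 2 : ℝ) * (∑ k, ∑ m, (R4 a m k m * ξ k b * ξ a b + ξ a k * R4 k m b m * ξ a b))
        - (1 / 2 : ℝ) * ∑ i, ∑ j, R4 i j a b * ξ i j * ξ a b := by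
    intro a b
    rw [sub_mul, mul_assoc, mul_assoc]
    congr 2
    · rw [Finset.sum_mul]
      refine Finset.sum_congr rfl fun k _ => ?_
      simp only [add_mul, Finset.sum_mul, Finset.mul_sum]
      rw [← Finset.sum_add_distrib]
    · rw [Finset.sum_mul]
      refine Finset.sum_congr rfl fun i _ => Finset.sum_mul ..
  simp only [soInner, rmOp]
  rw [sum2_congr expand]
  simp only [Finset.sum_sub_distrib, Finset.sum_add_distrib, ← Finset.mul_sum]
  have hP1 : (∑ a : Fin n, ∑ b : Fin n, ∑ k : Fin n, ∑ m : Fin n, R4 a m k m * ξ k b * ξ a b)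
      = ∑ i, ∑ j, ∑ l, ∑ c, R4 i j c j * ξ c l * ξ i l :=
    (rot234a (fun a b c d => R4 a b d b * ξ d c * ξ a c)).symm
  have hP2 : (∑ a : Fin n, ∑ b : Fin n, ∑ k : Fin n, ∑ m : Fin n, ξ a k * R4 k m b m * ξ a b)
      = ∑ i, ∑ j, ∑ l, ∑ c, R4 i j c j * ξ c l * ξ i l := by
    refine Eq.trans (sum4_congr (f := fun a b k m => ξ a k * R4 k m b m * ξ a b)
      (g := fun a b k m => R4 k m b m * ξ b a * ξ k a) ?_) ?_
    · intro a b k m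
      show ξ a k * R4 k m b m * ξ a b = R4 k m b m * ξ b a * ξ k a
      rw [hξ a k, hξ a b]; ring
    · exact (pairswap_4 (fun a b c d => R4 a b d b * ξ d c * ξ a c)).symm
  have hQ2 : (∑ a : Fin n, ∑ b : Fin n, ∑ i : Fin n, ∑ j : Fin n, R4 i j a b * ξ i j * ξ a b)
      = 2 * ∑ i, ∑ j, ∑ l, ∑ c, R4 i j c l * ξ c j * ξ i l := by
    refine (pairswap_4 (fun a b c d => R4 a b c d * ξ a b * ξ c d)).symm.trans ?_
    rw [key_bianchi R4 hanti hbianchi ξ hξ]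
    congr 1
    exact s34_4 (fun a b c d => R4 a b c d * ξ c b * ξ a d)
  rw [hP1, hP2, hQ2]
  ring
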